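/- There is an absolute constant δ > 0 such that for every ρ ∈ [−1,1] with |ρ − ρ*| ≥ 0.01, one has 1 + (2/π)·arcsin(ρ) ≥ (α_GW + δ)·(1 + ρ). -/

import Mathlib

/-- The Goemans–Williamson ratio function `f(ρ) = (1 + (2/π) arcsin ρ)/(1+ρ)`. -/
noncomputable def gwRatio (ρ : ℝ) : ℝ := (1 + 2 / Real.pi * Real.arcsin ρ) / (1 + ρ)

/-- The Goemans–Williamson constant `α_GW = min_{ρ ∈ (-1,1]} (1 + (2/π) arcsin ρ)/(1+ρ)`. -/
noncomputable def alphaGW : ℝ := sInf (gwRatio '' Set.Ioc (-1 : ℝ) 1)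

/-!
Substituting `ρ = -cos (2u)` with `u ∈ (0, π/2]` turns the ratio into `(2/π) · u / sin² u`,
whose derivative has the sign of `tan u - 2u`. This function is negative on `(0, π/4]` and
strictly increasing on `[π/4, π/2)`, so it has a single root `u₀ ∈ (π/4, π/2 - 1/4)`. Hence
`gwRatio` strictly decreases on `(-1, ρ*]` and strictly increases on `[ρ*, 1]`, where
`ρ* = -cos (2u₀) ∈ (0, 0.99)`. So `ρ*` is the only minimizer, and
`δ = min (f (ρ* - 0.01)) (f (ρ* + 0.01)) - α_GW` works.
-/

open Real Set

section Unimodal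

variable {f : ℝ → ℝ} {a b c x ε : ℝ}

theorem isMinOn_of_strictAntiOn_of_strictMonoOn (hanti : StrictAntiOn f (Ioc a c))
    (hmono : StrictMonoOn f (Icc c b)) : IsMinOn f (Ioc a b) c := by
  intro x hx
  rcases le_total x c with hxc | hcx
  · exact hanti.antitoneOn ⟨hx.1, hxc⟩ ⟨hx.1.trans_le hxc, le_rfl⟩ hxc
  · exact hmono.monotoneOn ⟨le_rfl, hcx.trans hx.2⟩ ⟨hcx, hx.2⟩ hcx

theorem IsMinOn.eq_of_strictAntiOn_of_strictMonoOn (hmin : IsMinOn f (Ioc a b) x)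
    (hanti : StrictAntiOn f (Ioc a c)) (hmono : StrictMonoOn f (Icc c b))
    (hc : c ∈ Ioc a b) (hx : x ∈ Ioc a b) : x = c := by
  have hfx : f x = f c :=
    le_antisymm (hmin hc) (isMinOn_of_strictAntiOn_of_strictMonoOn hanti hmono hx)
  rcases le_total x c with hxc | hcx
  · exact hanti.injOn ⟨hx.1, hxc⟩ ⟨hx.1.trans_le hxc, le_rfl⟩ hfx
  · exact hmono.injOn ⟨hcx, hx.2⟩ ⟨le_rfl, hcx.trans hx.2⟩ hfx

theorem min_le_of_strictAntiOn_of_strictMonoOn (hanti : StrictAntiOn f (Ioc a c))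
    (hmono : StrictMonoOn f (Icc c b)) (hε : 0 ≤ ε) (hleft : a < c - ε) (hright : c + ε ≤ b)
    (hx : x ∈ Ioc a b) (hxc : ε ≤ |x - c|) : min (f (c - ε)) (f (c + ε)) ≤ f x := by
  rcases le_abs'.1 hxc with hx_left | hx_right
  · refine min_le_of_left_le (hanti.antitoneOn ⟨hx.1, ?_⟩ ⟨hleft, ?_⟩ ?_) <;> linarith
  · refine min_le_of_right_le (hmono.monotoneOn ⟨?_, hright⟩ ⟨?_, hx.2⟩ ?_) <;> linarith

end Unimodal

theorem tan_lt_two_mul {u : ℝ} (h0 : 0 < u) (h : u ≤ π / 4) : tan u < 2 * u := by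
  have hcos : 0 < cos u := cos_pos_of_mem_Ioo ⟨by linarith [pi_pos], by linarith⟩
  have hcos2 : 0 ≤ cos (2 * u) := cos_nonneg_of_mem_Icc ⟨by linarith [pi_pos], by linarith⟩
  have hcos_sq := cos_sq u
  have : 1 < 2 * cos u := by nlinarith
  rw [tan_eq_sin_div_cos, div_lt_iff₀ hcos]
  nlinarith [sin_lt h0]

theorem strictMonoOn_tan_sub_two_mul :
    StrictMonoOn (fun u => tan u - 2 * u) (Ico (π / 4) (π / 2)) := by
  have hcos : ∀ x ∈ Ico (π / 4) (π / 2), 0 < cos x := fun x hx =>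
    cos_pos_of_mem_Ioo ⟨by linarith [hx.1, pi_pos], hx.2⟩
  apply strictMonoOn_of_deriv_pos (convex_Ico _ _)
  · exact (continuousOn_tan.mono fun x hx => (hcos x hx).ne').sub (by fun_prop)
  · intro x hx
    rw [interior_Ico] at hx
    have hcx := hcos x (Ioo_subset_Ico_self hx)
    have hd : HasDerivAt (fun u => tan u - 2 * u) (1 / cos x ^ 2 - 2 * 1) x :=
      (hasDerivAt_tan hcx.ne').sub ((hasDerivAt_id x).const_mul 2)
    rw [hd.deriv]
    have hcos2 : cos (2 * x) < 0 :=
      cos_neg_of_pi_div_two_lt_of_lt (by linarith [hx.1]) (by linarith [hx.2, pi_pos])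
    have : cos x ^ 2 < 1 / 2 := by rw [cos_sq x]; linarith
    have : 2 < 1 / cos x ^ 2 := by rw [lt_div_iff₀ (by positivity)]; linarith
    simp only [mul_one]
    linarith

theorem exists_tan_eq_two_mul : ∃ u ∈ Ioo (π / 4) (π / 2 - 1 / 4), tan u = 2 * u := by
  have hπ := pi_gt_three
  have hπ' := pi_le_four
  have hcont : ContinuousOn (fun u => tan u - 2 * u) (Icc (π / 4) (π / 2 - 1 / 4)) :=
    (continuousOn_tan.mono fun x hx =>
      (cos_pos_of_mem_Ioo ⟨by linarith [hx.1], by linarith [hx.2]⟩).ne').sub (by fun_prop)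
  have hleft : tan (π / 4) - 2 * (π / 4) < 0 := by
    linarith [tan_lt_two_mul (by positivity : 0 < π / 4) le_rfl]
  have hright : 0 < tan (π / 2 - 1 / 4) - 2 * (π / 2 - 1 / 4) := by
    have hsin : 0 < sin (1 / 4) := sin_pos_of_pos_of_lt_pi (by norm_num) (by linarith)
    have hcot : π - 1 / 2 < cos (1 / 4) / sin (1 / 4) := by
      rw [lt_div_iff₀ hsin]
      nlinarith [one_sub_sq_div_two_le_cos (x := 1 / 4), sin_le (x := 1 / 4) (by norm_num)]
    rw [tan_pi_div_two_sub, tan_eq_sin_div_cos, inv_div]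
    linarith
  obtain ⟨u, hu, hroot⟩ := intermediate_value_Ioo (by linarith) hcont ⟨hleft, hright⟩
  exact ⟨u, hu, sub_eq_zero.1 (by simpa using hroot)⟩

section TanRoot

variable {u₀ u : ℝ}

theorem tan_lt_two_mul_of_lt_root (hu₀ : u₀ ∈ Ioo (π / 4) (π / 2)) (htan : tan u₀ = 2 * u₀)
    (h0 : 0 < u) (hu : u < u₀) : tan u < 2 * u := by
  rcases le_or_gt u (π / 4) with h | h
  · exact tan_lt_two_mul h0 h
  · have := strictMonoOn_tan_sub_two_mul ⟨h.le, hu.trans hu₀.2⟩ ⟨hu₀.1.le, hu₀.2⟩ hu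
    simp only at this
    linarith

theorem two_mul_lt_tan_of_root_lt (hu₀ : u₀ ∈ Ioo (π / 4) (π / 2)) (htan : tan u₀ = 2 * u₀)
    (hu : u₀ < u) (h : u < π / 2) : 2 * u < tan u := by
  have := strictMonoOn_tan_sub_two_mul ⟨hu₀.1.le, hu₀.2⟩ ⟨hu₀.1.le.trans hu.le, h⟩ hu
  simp only at this
  linarith

theorem hasDerivAt_div_sin_sq (h0 : 0 < u) (h : u < π / 2) :
    HasDerivAt (fun x => x / sin x ^ 2) (cos u * (tan u - 2 * u) / sin u ^ 3) u := by
  have hsin : 0 < sin u := sin_pos_of_pos_of_lt_pi h0 (by linarith [pi_pos])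
  have hcos : 0 < cos u := cos_pos_of_mem_Ioo ⟨by linarith [pi_pos], h⟩
  refine ((hasDerivAt_id' u).div ((hasDerivAt_sin u).pow 2) (pow_pos hsin 2).ne').congr_deriv ?_
  rw [Pi.pow_apply, tan_eq_sin_div_cos]
  field_simp
  ring

theorem continuousOn_div_sin_sq : ContinuousOn (fun x => x / sin x ^ 2) (Ioc 0 (π / 2)) :=
  continuousOn_id.div (by fun_prop) fun x hx =>
    (pow_pos (sin_pos_of_pos_of_lt_pi hx.1 (by linarith [hx.2, pi_pos])) 2).ne'

theorem strictAntiOn_div_sin_sq (hu₀ : u₀ ∈ Ioo (π / 4) (π / 2)) (htan : tan u₀ = 2 * u₀) :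
    StrictAntiOn (fun x => x / sin x ^ 2) (Ioc 0 u₀) := by
  apply strictAntiOn_of_deriv_neg (convex_Ioc _ _)
    (continuousOn_div_sin_sq.mono (Ioc_subset_Ioc_right hu₀.2.le))
  intro x hx
  rw [interior_Ioc] at hx
  have hxπ : x < π / 2 := hx.2.trans hu₀.2
  rw [(hasDerivAt_div_sin_sq hx.1 hxπ).deriv]
  have hsin : 0 < sin x := sin_pos_of_pos_of_lt_pi hx.1 (by linarith [pi_pos])
  have hcos : 0 < cos x := cos_pos_of_mem_Ioo ⟨by linarith [hx.1, pi_pos], hxπ⟩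
  have hneg := sub_neg.2 (tan_lt_two_mul_of_lt_root hu₀ htan hx.1 hx.2)
  exact div_neg_of_neg_of_pos (mul_neg_of_pos_of_neg hcos hneg) (by positivity)

theorem strictMonoOn_div_sin_sq (hu₀ : u₀ ∈ Ioo (π / 4) (π / 2)) (htan : tan u₀ = 2 * u₀) :
    StrictMonoOn (fun x => x / sin x ^ 2) (Icc u₀ (π / 2)) := by
  have hu₀_pos : 0 < u₀ := by linarith [hu₀.1, pi_pos]
  apply strictMonoOn_of_deriv_pos (convex_Icc _ _)
    (continuousOn_div_sin_sq.mono (Icc_subset_Ioc_iff hu₀.2.le |>.2 ⟨hu₀_pos, le_rfl⟩))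
  intro x hx
  rw [interior_Icc] at hx
  have hx0 : 0 < x := hu₀_pos.trans hx.1
  rw [(hasDerivAt_div_sin_sq hx0 hx.2).deriv]
  have hsin : 0 < sin x := sin_pos_of_pos_of_lt_pi hx0 (by linarith [hx.2, pi_pos])
  have hcos : 0 < cos x := cos_pos_of_mem_Ioo ⟨by linarith [pi_pos], hx.2⟩
  have hpos := sub_pos.2 (two_mul_lt_tan_of_root_lt hu₀ htan hx.1 hx.2)
  positivity

end TanRoot

/-- The substitution `ρ = -cos (2u)`, under which `gwRatio ρ = (2/π) · u / sin² u`. -/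
noncomputable def gwAngle (ρ : ℝ) : ℝ := π / 4 + arcsin ρ / 2

theorem strictMonoOn_gwAngle : StrictMonoOn gwAngle (Icc (-1) 1) := fun _ hx _ hy hxy => by
  have := strictMonoOn_arcsin hx hy hxy
  simp only [gwAngle]
  linarith

theorem gwAngle_mem_Ioc {ρ : ℝ} (h : -1 < ρ) : gwAngle ρ ∈ Ioc 0 (π / 2) := by
  have := neg_pi_div_two_lt_arcsin.2 h
  have := arcsin_le_pi_div_two ρ
  constructor <;> simp only [gwAngle] <;> linarith

theorem gwAngle_neg_cos_two_mul {u : ℝ} (h0 : 0 ≤ u) (h : u ≤ π / 2) :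
    gwAngle (-cos (2 * u)) = u := by
  rw [gwAngle, ← sin_sub_pi_div_two, arcsin_sin (by linarith) (by linarith)]
  ring

theorem sin_gwAngle_sq {ρ : ℝ} (h₁ : -1 ≤ ρ) (h₂ : ρ ≤ 1) :
    sin (gwAngle ρ) ^ 2 = (1 + ρ) / 2 := by
  have hcos : cos (2 * gwAngle ρ) = -ρ := by
    rw [gwAngle, show 2 * (π / 4 + arcsin ρ / 2) = arcsin ρ + π / 2 by ring, cos_add_pi_div_two,
      sin_arcsin h₁ h₂]
  linarith [cos_sq' (gwAngle ρ), cos_sq (gwAngle ρ)]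

theorem gwRatio_eq {ρ : ℝ} (h₁ : -1 < ρ) (h₂ : ρ ≤ 1) :
    gwRatio ρ = 2 / π * (gwAngle ρ / sin (gwAngle ρ) ^ 2) := by
  have : 1 + ρ ≠ 0 := by linarith
  rw [sin_gwAngle_sq h₁.le h₂, gwRatio, gwAngle]
  field_simp
  ring

theorem gwRatio_lt_gwRatio_iff {x y : ℝ} (hx : x ∈ Ioc (-1) 1) (hy : y ∈ Ioc (-1) 1) :
    gwRatio x < gwRatio y ↔
      gwAngle x / sin (gwAngle x) ^ 2 < gwAngle y / sin (gwAngle y) ^ 2 := by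
  rw [gwRatio_eq hx.1 hx.2, gwRatio_eq hy.1 hy.2]
  exact mul_lt_mul_iff_of_pos_left (by positivity)

theorem gwRatio_mul_one_add (ρ : ℝ) : gwRatio ρ * (1 + ρ) = 1 + 2 / π * arcsin ρ := by
  rcases eq_or_ne (1 + ρ) 0 with h | h
  · obtain rfl : ρ = -1 := by linarith
    rw [arcsin_neg_one, add_neg_cancel, mul_zero]
    field_simp
    ring
  · exact div_mul_cancel₀ _ h

theorem exists_gwRatio_strictAntiOn_strictMonoOn : ∃ c : ℝ, 0 < c ∧ c < 0.99 ∧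
    StrictAntiOn gwRatio (Ioc (-1) c) ∧ StrictMonoOn gwRatio (Icc c 1) := by
  obtain ⟨u₀, ⟨hlo, hhi⟩, htan⟩ := exists_tan_eq_two_mul
  have hπ := pi_gt_three
  have hπ' := pi_le_four
  have hu₀ : u₀ ∈ Ioo (π / 4) (π / 2) := ⟨hlo, by linarith⟩
  set c := -cos (2 * u₀)
  have hc_angle : gwAngle c = u₀ := gwAngle_neg_cos_two_mul (by linarith) hu₀.2.le
  have hc_pos : 0 < c := neg_pos.2 (cos_neg_of_pi_div_two_lt_of_lt (by linarith) (by linarith))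
  have hc_lt : c < 0.99 := by
    have h₁ : cos (π - 1 / 2) < cos (2 * u₀) :=
      cos_lt_cos_of_nonneg_of_le_pi (by linarith) (by linarith) (by linarith)
    have h₂ := cos_le_one_sub_mul_cos_sq (x := 1 / 2) (by rw [abs_of_pos] <;> linarith)
    have h₃ : 2 / π ^ 2 * (1 / 2) ^ 2 ≥ 1 / 32 := by
      rw [ge_iff_le, div_mul_eq_mul_div, le_div_iff₀ (by positivity)]
      nlinarith
    rw [cos_pi_sub] at h₁
    norm_num at h₂ h₃ ⊢
    linarith
  refine ⟨c, hc_pos, hc_lt, fun x hx y hy hxy => ?_, fun x hx y hy hxy => ?_⟩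
  · have hmaps : ∀ z ∈ Ioc (-1) c, gwAngle z ∈ Ioc 0 u₀ := fun z hz =>
      ⟨(gwAngle_mem_Ioc hz.1).1, hc_angle ▸
        strictMonoOn_gwAngle.monotoneOn ⟨hz.1.le, by linarith [hz.2]⟩ ⟨by linarith, by linarith⟩ hz.2⟩
    refine (gwRatio_lt_gwRatio_iff ⟨hy.1, by linarith [hy.2]⟩ ⟨hx.1, by linarith [hx.2]⟩).2 ?_
    exact strictAntiOn_div_sin_sq hu₀ htan (hmaps x hx) (hmaps y hy)
      (strictMonoOn_gwAngle ⟨hx.1.le, by linarith [hx.2]⟩ ⟨hy.1.le, by linarith [hy.2]⟩ hxy)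
  · have hmaps : ∀ z ∈ Icc c 1, gwAngle z ∈ Icc u₀ (π / 2) := fun z hz =>
      ⟨hc_angle ▸ strictMonoOn_gwAngle.monotoneOn ⟨by linarith, by linarith⟩
        ⟨by linarith [hz.1], hz.2⟩ hz.1, (gwAngle_mem_Ioc (by linarith [hz.1])).2⟩
    refine (gwRatio_lt_gwRatio_iff ⟨by linarith [hx.1], hx.2⟩ ⟨by linarith [hy.1], hy.2⟩).2 ?_
    exact strictMonoOn_div_sin_sq hu₀ htan (hmaps x hx) (hmaps y hy)
      (strictMonoOn_gwAngle ⟨by linarith [hx.1], hx.2⟩ ⟨by linarith [hy.1], hy.2⟩ hxy)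

/-- There is an absolute constant `δ > 0` such that for every minimizer `ρ*` of the GW
ratio on `(-1,1]` and every `ρ ∈ [-1,1]` with `|ρ - ρ*| ≥ 0.01`, one has
`1 + (2/π) arcsin ρ ≥ (α_GW + δ)(1 + ρ)`. -/
theorem gw_ratio_gain_away_from_minimizer :
    ∃ δ : ℝ, δ > 0 ∧ ∀ ρstar : ℝ, ρstar ∈ Set.Ioc (-1 : ℝ) 1 →
      (∀ ρ ∈ Set.Ioc (-1 : ℝ) 1, gwRatio ρstar ≤ gwRatio ρ) →
      ∀ ρ ∈ Set.Icc (-1 : ℝ) 1, 0.01 ≤ |ρ - ρstar| →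
        1 + 2 / Real.pi * Real.arcsin ρ ≥ (alphaGW + δ) * (1 + ρ) := by
  obtain ⟨c, hc_pos, hc_lt, hanti, hmono⟩ := exists_gwRatio_strictAntiOn_strictMonoOn
  have hc : c ∈ Ioc (-1) 1 := ⟨by linarith, by linarith⟩
  refine ⟨min (gwRatio (c - 0.01)) (gwRatio (c + 0.01)) - gwRatio c, ?_, ?_⟩
  · have h₁ := hanti ⟨by linarith, by linarith⟩ ⟨by linarith, le_rfl⟩ (by linarith : c - 0.01 < c)
    have h₂ := hmono ⟨le_rfl, by linarith⟩ ⟨by linarith, by linarith⟩ (by linarith : c < c + 0.01)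
    exact sub_pos.2 (lt_min h₁ h₂)
  intro ρstar hρstar hmin ρ hρ hdist
  obtain rfl : ρstar = c :=
    (isMinOn_iff.2 hmin).eq_of_strictAntiOn_of_strictMonoOn hanti hmono hc hρstar
  have hα : alphaGW = gwRatio ρstar :=
    IsLeast.csInf_eq ⟨mem_image_of_mem _ hρstar, forall_mem_image.2 hmin⟩
  rw [ge_iff_le, ← gwRatio_mul_one_add, hα, add_sub_cancel]
  rcases hρ.1.eq_or_lt with rfl | hρ₀
  · simp
  · exact mul_le_mul_of_nonneg_right (min_le_of_strictAntiOn_of_strictMonoOn hanti hmono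
      (by norm_num) (by linarith) (by linarith) ⟨hρ₀, hρ.2⟩ hdist) (by linarith)
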